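/- arXiv:1911.02857 — 2 statements merged into one kernel-verified Lean document; each statement's English description precedes it below -/
import Mathlib

section
/- Let Δf(t_n) = (2HR/(T_d·D'²))·ln(T_d·D'·ΔP_L/(2HR) + 1) − ΔP_L/D' denote the frequency nadir. In the limit D' → 0⁺ (with H, R, T_d, ΔP_L > 0 fixed), Δf(t_n) → −ΔP_L²·T_d/(4HR). Consequently, in the zero-damping limit the nadir magnitude constraint |Δf(t_n)| ≤ Δf_lim is equivalent to H·R ≥ ΔP_L²·T_d/(4·Δf_lim). -/
/-!
With `k = T_d ΔP_L / (2HR)` the nadir equals `(2HR / T_d) · (log (1 + kD) - kD) / D²`: the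
`-ΔP_L / D` term cancels the linear term of `log (1 + kD)` exactly. The second-order Taylor
bound `|log (1 + x) - x + x²/2| ≤ |x|³ / (1 - |x|)` then gives the limit `-(2HR / T_d) k² / 2`.
-/

open Filter Real
open scoped Topology

lemma abs_log_one_add_sub_self_add_sq_div_two_le {x : ℝ} (hx : |x| < 1) :
    |log (1 + x) - x + x ^ 2 / 2| ≤ |x| ^ 3 / (1 - |x|) := by
  have h := abs_log_sub_add_sum_range_le (x := -x) (by rwa [abs_neg]) 2
  rw [abs_neg] at h
  convert h using 2
  simp only [Finset.sum_range_succ, Finset.sum_range_zero, sub_neg_eq_add]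
  push_cast
  ring_nf

lemma tendsto_log_one_add_mul_sub_div_sq (k : ℝ) :
    Tendsto (fun x => (log (1 + k * x) - k * x) / x ^ 2) (𝓝[≠] 0) (𝓝 (-(k ^ 2 / 2))) := by
  rw [← tendsto_sub_nhds_zero_iff]
  have hbound : Tendsto (fun x => |k| ^ 3 * |x| / (1 - |k * x|)) (𝓝[≠] 0) (𝓝 0) := by
    have : ContinuousAt (fun x => |k| ^ 3 * |x| / (1 - |k * x|)) 0 :=
      ContinuousAt.div (by fun_prop) (by fun_prop) (by simp)
    simpa using this.tendsto.mono_left nhdsWithin_le_nhds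
  have hsmall : ∀ᶠ x in 𝓝[≠] (0 : ℝ), |k * x| < 1 := by
    have : ContinuousAt (fun x => |k * x|) 0 := by fun_prop
    exact nhdsWithin_le_nhds (this.eventually (gt_mem_nhds (by simp)))
  refine squeeze_zero_norm' ?_ hbound
  filter_upwards [hsmall, self_mem_nhdsWithin] with x hkx (hx : x ≠ 0)
  have hx2 : 0 < x ^ 2 := by positivity
  have hsplit : (log (1 + k * x) - k * x) / x ^ 2 - -(k ^ 2 / 2)
      = (log (1 + k * x) - k * x + (k * x) ^ 2 / 2) / x ^ 2 := by
    field_simp; ring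
  rw [Real.norm_eq_abs, hsplit, abs_div, abs_of_pos hx2, div_le_iff₀ hx2]
  calc _ ≤ |k * x| ^ 3 / (1 - |k * x|) := abs_log_one_add_sub_self_add_sq_div_two_le hkx
    _ = _ := by rw [abs_mul, ← sq_abs x]; ring

lemma tendsto_nadir_nhdsNE_zero {a Td : ℝ} (ha : a ≠ 0) (hTd : Td ≠ 0) (P : ℝ) :
    Tendsto (fun D => a / (Td * D ^ 2) * log (Td * D * P / a + 1) - P / D) (𝓝[≠] 0)
      (𝓝 (-(P ^ 2 * Td / (2 * a)))) := by
  have hlim := (tendsto_log_one_add_mul_sub_div_sq (Td * P / a)).const_mul (a / Td)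
  rw [show a / Td * -((Td * P / a) ^ 2 / 2) = -(P ^ 2 * Td / (2 * a)) by field_simp]
    at hlim
  refine hlim.congr' ?_
  filter_upwards [self_mem_nhdsWithin] with D (hD : D ≠ 0)
  rw [show Td * D * P / a + 1 = 1 + Td * P / a * D by ring]
  field_simp

theorem nadir_zero_damping_limit_general
    (H R Td ΔPL Δflim : ℝ)
    (hH : 0 < H) (hR : 0 < R) (hTd : 0 < Td) (hlim : 0 < Δflim) :
    Filter.Tendsto
      (fun D' : ℝ =>
        (2 * H * R / (Td * D' ^ 2)) *
          Real.log (Td * D' * ΔPL / (2 * H * R) + 1) - ΔPL / D')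
      (nhdsWithin 0 (Set.Ioi 0))
      (nhds (-(ΔPL ^ 2 * Td / (4 * H * R)))) ∧
    (|(-(ΔPL ^ 2 * Td / (4 * H * R)))| ≤ Δflim ↔
      H * R ≥ ΔPL ^ 2 * Td / (4 * Δflim)) := by
  have hnadir : -(ΔPL ^ 2 * Td / (2 * (2 * H * R))) = -(ΔPL ^ 2 * Td / (4 * H * R)) := by ring
  refine ⟨?_, ?_⟩
  · rw [← hnadir]
    exact (tendsto_nadir_nhdsNE_zero (by positivity) hTd.ne' ΔPL).mono_left
      (nhdsWithin_mono 0 fun D (hD : 0 < D) => hD.ne')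
  · rw [abs_neg, abs_of_nonneg (by positivity), ge_iff_le, div_le_iff₀ (by positivity),
      div_le_iff₀ (by positivity)]
    constructor <;> intro h <;> linarith

/-- the frequency nadir tends to `−ΔP_L²·T_d/(4HR)` as `D' → 0⁺`, and in
this zero-damping limit the nadir magnitude constraint is equivalent to
`H·R ≥ ΔP_L²·T_d/(4·Δf_lim)`. -/
theorem nadir_zero_damping_limit
    (H R Td ΔPL Δflim : ℝ)
    (hH : 0 < H) (hR : 0 < R) (hTd : 0 < Td) (hP : 0 < ΔPL) (hlim : 0 < Δflim) :
    Filter.Tendsto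
      (fun D' : ℝ =>
        (2 * H * R / (Td * D' ^ 2)) *
          Real.log (Td * D' * ΔPL / (2 * H * R) + 1) - ΔPL / D')
      (nhdsWithin 0 (Set.Ioi 0))
      (nhds (-(ΔPL ^ 2 * Td / (4 * H * R)))) ∧
    (|(-(ΔPL ^ 2 * Td / (4 * H * R)))| ≤ Δflim ↔
      H * R ≥ ΔPL ^ 2 * Td / (4 * Δflim)) :=
  nadir_zero_damping_limit_general H R Td ΔPL Δflim hH hR hTd hlim
end

section
/- For fixed H, R, T_d, ΔP_L > 0, the function D' ↦ −Δf(t_n) = ΔP_L/D' − (2HR/(T_d·D'²))·ln(T_d·D'·ΔP_L/(2HR) + 1) is strictly decreasing in D' on (0, ∞). -/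
/-!
Substituting `x = a·D'` with `a = T_d·ΔP_L/(2HR)` writes the nadir magnitude as
`(ΔP_L·a)·g(a·D')` with `g x = 1/x − log(1+x)/x²` (`nadirProfile`), so it suffices that `g` is
strictly decreasing on `(0, ∞)`. Its derivative is `(2 log(1+x) − x − x/(1+x))/x³`, which is negative because, with
`u = log(1+x) > 0`, the inequality `2 log(1+x) < x + x/(1+x)` is just `u < sinh u`.
-/

open Real Set

lemma two_mul_log_one_add_lt {x : ℝ} (hx : 0 < x) :
    2 * log (1 + x) < x + x / (1 + x) := by
  have hx1 : 0 < 1 + x := by linarith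
  have hsinh : sinh (log (1 + x)) = (x + x / (1 + x)) / 2 := by
    rw [sinh_eq, exp_neg, exp_log hx1]
    field_simp
    ring
  have := self_lt_sinh_iff.mpr (log_pos (by linarith : (1 : ℝ) < 1 + x))
  linarith

noncomputable def nadirProfile (x : ℝ) : ℝ := x⁻¹ - log (1 + x) / x ^ 2

lemma hasDerivAt_nadirProfile {x : ℝ} (hx : 0 < x) :
    HasDerivAt nadirProfile ((2 * log (1 + x) - (x + x / (1 + x))) / x ^ 3) x := by
  have hx1 : 1 + x ≠ 0 := by positivity
  have hlog : HasDerivAt (fun y => log (1 + y)) (1 / (1 + x)) x := by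
    simpa using ((hasDerivAt_id x).const_add 1).log hx1
  refine ((hasDerivAt_inv hx.ne').sub (hlog.div (hasDerivAt_pow 2 x) (by positivity)))
    |>.congr_deriv ?_
  field_simp
  ring

lemma strictAntiOn_nadirProfile : StrictAntiOn nadirProfile (Ioi 0) := by
  refine strictAntiOn_of_deriv_neg (convex_Ioi 0)
    (fun x hx => (hasDerivAt_nadirProfile hx).continuousAt.continuousWithinAt) ?_
  intro x hx
  rw [interior_Ioi] at hx
  rw [(hasDerivAt_nadirProfile hx).deriv]
  exact div_neg_of_neg_of_pos (by linarith [two_mul_log_one_add_lt hx]) (pow_pos hx 3)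

/-- the nadir magnitude
`D' ↦ ΔP_L/D' − (2HR/(T_d·D'²))·ln(T_d·D'·ΔP_L/(2HR) + 1)` is strictly decreasing
on `(0, ∞)`. -/
theorem nadir_magnitude_strictAnti
    (H R Td ΔPL : ℝ)
    (hH : 0 < H) (hR : 0 < R) (hTd : 0 < Td) (hP : 0 < ΔPL) :
    StrictAntiOn
      (fun D' : ℝ =>
        ΔPL / D' - (2 * H * R / (Td * D' ^ 2)) *
          Real.log (Td * D' * ΔPL / (2 * H * R) + 1))
      (Set.Ioi 0) := by
  set a := Td * ΔPL / (2 * H * R)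
  have ha : 0 < a := by positivity
  have hscaled : StrictAntiOn (fun D' => ΔPL * a * nadirProfile (a * D')) (Ioi 0) :=
    fun x hx y hy hxy => mul_lt_mul_of_pos_left
      (strictAntiOn_nadirProfile (mul_pos ha hx) (mul_pos ha hy) (mul_lt_mul_of_pos_left hxy ha))
      (by positivity)
  refine hscaled.congr fun D' (hD' : 0 < D') => ?_
  simp only [nadirProfile, a]
  rw [add_comm 1]
  field_simp
end
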